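/- For any D₁ > h²D > 0 and all x ∈ ℝⁿ: e^{-|x|²/D₁} = (D₁/(πD(D₁ - h²D)))^{n/2} Σ_{m ∈ ℤⁿ} e^{-h²|m|²/(D₁ - h²D)} e^{-|x - hm|²/(h²D)} - e^{-|x|²/D₁} Σ_{k ∈ ℤⁿ \ {0}} e^{2πi(D₁ - h²D)(x,k)/(hD₁)} e^{-π²D(D₁ - h²D)|k|²/D₁}. -/

import Mathlib

open Real
open scoped BigOperators

/-- The lattice point `m ∈ ℤⁿ` viewed as a vector in Euclidean space. -/
def latt {n : ℕ} (m : Fin n → ℤ) : EuclideanSpace ℝ (Fin n) := WithLp.toLp 2 (fun i => (m i : ℝ))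


lemma summable_gauss (c μ : ℝ) (hc : 0 < c) :
    Summable (fun m : ℤ => Real.exp (-c * ((m : ℝ) - μ) ^ 2)) := by
  have hτ : (0:ℝ) < (Complex.I * ((c / π : ℝ) : ℂ)).im := by
    simp [div_pos hc Real.pi_pos]
  have h1 : Summable (jacobiTheta₂_term · (-Complex.I * ((c * μ / π : ℝ) : ℂ))
      (Complex.I * ((c / π : ℝ) : ℂ))) :=
    (summable_jacobiTheta₂_term_iff _ _).mpr hτ
  have h2 := summable_norm_iff.mpr h1
  have h3 : Summable (fun m : ℤ => Real.exp (-c * (m:ℝ)^2 + 2*c*μ*m)) := by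
    refine h2.congr fun m => ?_
    rw [norm_jacobiTheta₂_term]
    congr 1
    have hπ : (π:ℝ) ≠ 0 := Real.pi_ne_zero
    simp only [Complex.mul_im, Complex.I_re, Complex.I_im, Complex.ofReal_re, Complex.ofReal_im,
      Complex.neg_im, Complex.neg_re]
    field_simp
    ring
  refine (h3.mul_left (Real.exp (-c * μ^2))).congr fun m => ?_
  rw [← Real.exp_add]
  congr 1
  ring

noncomputable def Gterm (c μ : ℝ) (k : ℤ) : ℂ :=
  Complex.exp (((2 * π * μ * k : ℝ) : ℂ) * Complex.I - ((π ^ 2 * k ^ 2 / c : ℝ) : ℂ))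

lemma norm_Gterm (c μ : ℝ) (k : ℤ) : ‖Gterm c μ k‖ = Real.exp (-(π^2 * k^2 / c)) := by
  rw [Gterm, Complex.norm_exp]
  congr 1
  simp [← Complex.ofReal_pow]

lemma summable_Gterm (c μ : ℝ) (hc : 0 < c) : Summable (fun k => ‖Gterm c μ k‖) := by
  have := summable_gauss (π^2/c) 0 (div_pos (pow_pos Real.pi_pos 2) hc)
  refine this.congr fun k => ?_
  rw [norm_Gterm]
  congr 1
  ring

lemma summable_gauss' (c μ : ℝ) (hc : 0 < c) :
    Summable (fun m : ℤ => ((Real.exp (-c * ((m : ℝ) - μ) ^ 2) : ℝ) : ℂ)) := by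
  rw [← summable_norm_iff]
  refine (summable_gauss c μ hc).congr fun m => ?_
  rw [Complex.norm_real, Real.norm_eq_abs, _root_.abs_of_nonneg (Real.exp_nonneg _)]

lemma gauss_poisson (c μ : ℝ) (hc : 0 < c) :
    (∑' m : ℤ, ((Real.exp (-c * ((m : ℝ) - μ) ^ 2) : ℝ) : ℂ)) =
      (((π / c) ^ ((1:ℝ)/2) : ℝ) : ℂ) * ∑' k : ℤ, Gterm c μ k := by
  have hπ : (0:ℝ) < π := Real.pi_pos
  have hπ' : (π:ℝ) ≠ 0 := hπ.ne'
  have hc' : c ≠ 0 := hc.ne'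
  have hcC : (c:ℂ) ≠ 0 := by exact_mod_cast hc'
  have hπC : ((π:ℝ):ℂ) ≠ 0 := by exact_mod_cast hπ'
  set a : ℂ := ((c / π : ℝ) : ℂ) with ha_def
  have ha : 0 < a.re := by simp [ha_def, div_pos hc hπ]
  set b : ℂ := ((c * μ / π : ℝ) : ℂ) with hb_def
  have step1 : ∀ m : ℤ, ((Real.exp (-c * ((m : ℝ) - μ) ^ 2) : ℝ) : ℂ) =
      Complex.exp (-(c:ℂ) * (μ:ℂ)^2) * Complex.exp (-(π:ℝ) * a * (m:ℂ)^2 + 2 * (π:ℝ) * b * (m:ℂ)) := by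
    intro m
    rw [Complex.ofReal_exp, ← Complex.exp_add]
    congr 1
    push_cast [ha_def, hb_def]
    field_simp
    ring
  have step3 : ∀ n : ℤ, Complex.exp (-(π:ℝ) / a * ((n:ℂ) + Complex.I * b) ^ 2) =
      Complex.exp ((c:ℂ) * (μ:ℂ)^2) * Gterm c μ (-n) := by
    intro n
    rw [Gterm, ← Complex.exp_add]
    congr 1
    have : ((n:ℂ) + Complex.I * b)^2 = (n:ℂ)^2 + 2*(n:ℂ)*Complex.I*b + Complex.I^2*b^2 := by ring
    rw [this, Complex.I_sq]
    push_cast [ha_def, hb_def]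
    field_simp
    ring
  have hcancel : Complex.exp (-(c:ℂ)*(μ:ℂ)^2) * Complex.exp ((c:ℂ)*(μ:ℂ)^2) = 1 := by
    rw [← Complex.exp_add]; ring_nf; exact Complex.exp_zero
  have hpow : a ^ (1/2 : ℂ) = (((c/π) ^ ((1:ℝ)/2) : ℝ) : ℂ) := by
    rw [ha_def, show (1/2:ℂ) = (((1:ℝ)/2 : ℝ) : ℂ) by norm_num,
      ← Complex.ofReal_cpow (by positivity)]
  have hinv : (π/c) ^ ((1:ℝ)/2) = ((c/π) ^ ((1:ℝ)/2))⁻¹ := by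
    rw [← Real.inv_rpow (by positivity), inv_div]
  calc (∑' m : ℤ, ((Real.exp (-c * ((m : ℝ) - μ) ^ 2) : ℝ) : ℂ))
      = ∑' m : ℤ, Complex.exp (-(c:ℂ) * (μ:ℂ)^2) *
          Complex.exp (-(π:ℝ) * a * (m:ℂ)^2 + 2 * (π:ℝ) * b * (m:ℂ)) := tsum_congr step1
    _ = Complex.exp (-(c:ℂ) * (μ:ℂ)^2) *
          ∑' m : ℤ, Complex.exp (-(π:ℝ) * a * (m:ℂ)^2 + 2 * (π:ℝ) * b * (m:ℂ)) := tsum_mul_left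
    _ = Complex.exp (-(c:ℂ) * (μ:ℂ)^2) * (1 / a ^ (1/2 : ℂ) *
          ∑' n : ℤ, Complex.exp (-(π:ℝ) / a * ((n:ℂ) + Complex.I * b) ^ 2)) := by
        rw [Complex.tsum_exp_neg_quadratic ha b]
    _ = Complex.exp (-(c:ℂ) * (μ:ℂ)^2) * (1 / a ^ (1/2 : ℂ) *
          (Complex.exp ((c:ℂ) * (μ:ℂ)^2) * ∑' n : ℤ, Gterm c μ (-n))) := by
        rw [tsum_congr step3, tsum_mul_left]
    _ = 1 / a ^ (1/2 : ℂ) * ∑' n : ℤ, Gterm c μ (-n) := by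
        linear_combination (1 / a ^ (1/2 : ℂ) * (∑' n : ℤ, Gterm c μ (-n))) * hcancel
    _ = (((π / c) ^ ((1:ℝ)/2) : ℝ) : ℂ) * ∑' k : ℤ, Gterm c μ k := by
        congr 1
        · rw [hpow, hinv]
          push_cast
          rw [one_div]
        · exact (Equiv.neg ℤ).tsum_eq (fun k => Gterm c μ k)


set_option maxHeartbeats 1000000 in
lemma summable_pi_prod {n : ℕ} (g : Fin n → ℤ → ℝ) (hg : ∀ i, Summable (g i))
    (hpos : ∀ i k, 0 ≤ g i k) :
    Summable (fun m : Fin n → ℤ => ∏ i, g i (m i)) := by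
  induction n with
  | zero =>
      exact ⟨1, by simpa using hasSum_fintype (fun m : Fin 0 → ℤ => ∏ i, g i (m i))⟩
  | succ n ih =>
      rw [← (Fin.consEquiv (fun _ : Fin (n+1) => ℤ)).summable_iff]
      have : ((fun m : Fin (n+1) → ℤ => ∏ i, g i (m i)) ∘ (Fin.consEquiv (fun _ : Fin (n+1) => ℤ))) =
          fun p : ℤ × (Fin n → ℤ) => g 0 p.1 * ∏ i, g (Fin.succ i) (p.2 i) := by
        funext p
        simp [Fin.prod_univ_succ, Fin.consEquiv]
      rw [this]
      exact Summable.mul_of_nonneg (f := g 0)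
        (g := fun m : Fin n → ℤ => ∏ i, g (Fin.succ i) (m i)) (hg 0)
        (ih (fun i => g (Fin.succ i)) (fun i => hg _) (fun i k => hpos _ _))
        (fun k => hpos _ _) (fun p => Finset.prod_nonneg fun i _ => hpos _ _)

lemma summable_pi_prodC {n : ℕ} (g : Fin n → ℤ → ℂ) (hg : ∀ i, Summable (fun k => ‖g i k‖)) :
    Summable (fun m : Fin n → ℤ => ∏ i, g i (m i)) := by
  refine Summable.of_norm ?_
  refine (summable_pi_prod (fun i k => ‖g i k‖) hg (fun i k => norm_nonneg _)).congr fun m => ?_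
  rw [norm_prod]

lemma tsum_pi_prodC {n : ℕ} (g : Fin n → ℤ → ℂ) (hg : ∀ i, Summable (fun k => ‖g i k‖)) :
    ∑' m : Fin n → ℤ, ∏ i, g i (m i) = ∏ i, ∑' k : ℤ, g i k := by
  induction n with
  | zero =>
      simp [tsum_eq_single (fun (i : Fin 0) => (0:ℤ)) (by intro b hb; exact absurd (funext fun i => i.elim0) hb)]
  | succ n ih =>
      rw [← (Fin.consEquiv (fun _ : Fin (n+1) => ℤ)).tsum_eq]
      have h1 : ∀ p : ℤ × (Fin n → ℤ),
          (∏ i, g i ((Fin.consEquiv (fun _ : Fin (n+1) => ℤ)) p i)) =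
            g 0 p.1 * ∏ i, g (Fin.succ i) (p.2 i) := by
        intro p
        simp [Fin.prod_univ_succ, Fin.consEquiv]
      rw [tsum_congr h1]
      have hnorm : Summable (fun m : Fin n → ℤ => ‖∏ i, g (Fin.succ i) (m i)‖) := by
        refine (summable_pi_prod (fun i k => ‖g (Fin.succ i) k‖) (fun i => hg _)
          (fun i k => norm_nonneg _)).congr fun m => ?_
        rw [norm_prod]
      rw [← tsum_mul_tsum_of_summable_norm (hg 0) hnorm,
        ih (fun i => g (Fin.succ i)) (fun i => hg _), Fin.prod_univ_succ]

set_option maxHeartbeats 1000000 in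
/-- the exact Gaussian refinement relation: for `D₁ > h²D > 0`,
`e^{-|x|²/D₁} = (D₁/(πD(D₁-h²D)))^{n/2} Σ_m e^{-h²|m|²/(D₁-h²D)} e^{-|x-hm|²/(h²D)}
 - e^{-|x|²/D₁} Σ_{k≠0} e^{2πi(D₁-h²D)(x,k)/(hD₁)} e^{-π²D(D₁-h²D)|k|²/D₁}`. -/
theorem stmt3 {n : ℕ} (D D₁ h : ℝ) (hh : 0 < h) (hD : 0 < D)
    (hD1 : h ^ 2 * D < D₁) (x : EuclideanSpace ℝ (Fin n)) :
    ((Real.exp (-‖x‖ ^ 2 / D₁) : ℝ) : ℂ) =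
      (((D₁ / (Real.pi * D * (D₁ - h ^ 2 * D))) ^ ((n : ℝ) / 2) : ℝ) : ℂ) *
        (((∑' m : Fin n → ℤ,
            Real.exp (-h ^ 2 * (∑ i, (m i : ℝ) ^ 2) / (D₁ - h ^ 2 * D)) *
              Real.exp (-‖x - h • latt m‖ ^ 2 / (h ^ 2 * D))) : ℝ) : ℂ)
      - ((Real.exp (-‖x‖ ^ 2 / D₁) : ℝ) : ℂ) *
          ∑' k : {k : Fin n → ℤ // k ≠ 0},
            Complex.exp (2 * Real.pi * Complex.I * (((D₁ - h ^ 2 * D) : ℝ) : ℂ) *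
                (((∑ i, x i * (k.1 i : ℝ)) : ℝ) : ℂ) / (((h * D₁ : ℝ)) : ℂ)) *
              Complex.exp (-(((Real.pi ^ 2 * D * (D₁ - h ^ 2 * D) *
                (∑ i, (k.1 i : ℝ) ^ 2) / D₁) : ℝ) : ℂ)) := by
  have hπ : (0:ℝ) < π := Real.pi_pos
  have hD1p : (0:ℝ) < D₁ := lt_trans (by positivity) hD1
  set A : ℝ := D₁ - h ^ 2 * D with hA_def
  have hA : 0 < A := by rw [hA_def]; linarith
  set c : ℝ := D₁ / (A * D) with hc_def
  have hc : 0 < c := by positivity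
  set μ : Fin n → ℝ := fun i => A * x i / (h * D₁) with hμ_def
  have hnorm : ∀ y : EuclideanSpace ℝ (Fin n), ‖y‖ ^ 2 = ∑ i, (y i) ^ 2 := by
    intro y
    rw [EuclideanSpace.norm_eq, Real.sq_sqrt (Finset.sum_nonneg fun i _ => by positivity)]
    exact Finset.sum_congr rfl fun i _ => by rw [Real.norm_eq_abs, sq_abs]
  have happly : ∀ (m : Fin n → ℤ) (i : Fin n), (x - h • latt m) i = x i - h * (m i : ℝ) :=
    fun m i => by simp [latt]
  have key : ∀ t m : ℝ, -h ^ 2 * m ^ 2 / A - (t - h * m) ^ 2 / (h ^ 2 * D)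
      = -t ^ 2 / D₁ + (-c * (m - A * t / (h * D₁)) ^ 2) := by
    intro t m
    rw [hc_def, hA_def]
    have hA0 : D₁ - h ^ 2 * D ≠ 0 := by linarith
    field_simp
    ring
  -- m-side termwise
  have hM_term : ∀ m : Fin n → ℤ,
      Real.exp (-h ^ 2 * (∑ i, (m i : ℝ) ^ 2) / A) *
          Real.exp (-‖x - h • latt m‖ ^ 2 / (h ^ 2 * D))
      = Real.exp (-‖x‖ ^ 2 / D₁) * ∏ i, Real.exp (-c * ((m i : ℝ) - μ i) ^ 2) := by
    intro m
    rw [← Real.exp_sum, ← Real.exp_add, ← Real.exp_add]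
    congr 1
    rw [hnorm, hnorm]
    simp only [happly]
    rw [Finset.mul_sum, ← Finset.sum_neg_distrib, ← Finset.sum_neg_distrib,
      Finset.sum_div, Finset.sum_div, Finset.sum_div,
      ← Finset.sum_add_distrib, ← Finset.sum_add_distrib]
    refine Finset.sum_congr rfl fun i _ => ?_
    have := key (x i) (m i)
    simp only [hμ_def]
    linear_combination this
  have hg_summ : ∀ i : Fin n,
      Summable (fun k : ℤ => ‖((Real.exp (-c * ((k : ℝ) - μ i) ^ 2) : ℝ) : ℂ)‖) := by
    intro i
    refine (summable_gauss c (μ i) hc).congr fun k => ?_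
    rw [Complex.norm_real, Real.norm_eq_abs, abs_of_nonneg (Real.exp_nonneg _)]
  -- m-side sum
  have hMsum : ((∑' m : Fin n → ℤ,
        Real.exp (-h ^ 2 * (∑ i, (m i : ℝ) ^ 2) / A) *
          Real.exp (-‖x - h • latt m‖ ^ 2 / (h ^ 2 * D)) : ℝ) : ℂ)
      = ((Real.exp (-‖x‖ ^ 2 / D₁) : ℝ) : ℂ) *
          ((((π / c) ^ ((n : ℝ) / 2) : ℝ) : ℂ) *
            ∑' k : Fin n → ℤ, ∏ i, Gterm c (μ i) (k i)) := by
    rw [Complex.ofReal_tsum]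
    calc (∑' m : Fin n → ℤ, ((Real.exp (-h ^ 2 * (∑ i, (m i : ℝ) ^ 2) / A) *
            Real.exp (-‖x - h • latt m‖ ^ 2 / (h ^ 2 * D)) : ℝ) : ℂ))
        = ∑' m : Fin n → ℤ, ((Real.exp (-‖x‖ ^ 2 / D₁) : ℝ) : ℂ) *
            ∏ i, ((Real.exp (-c * ((m i : ℝ) - μ i) ^ 2) : ℝ) : ℂ) := by
          refine tsum_congr fun m => ?_
          rw [hM_term m, Complex.ofReal_mul, Complex.ofReal_prod]
      _ = ((Real.exp (-‖x‖ ^ 2 / D₁) : ℝ) : ℂ) *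
            ∑' m : Fin n → ℤ, ∏ i, ((Real.exp (-c * ((m i : ℝ) - μ i) ^ 2) : ℝ) : ℂ) :=
          tsum_mul_left
      _ = ((Real.exp (-‖x‖ ^ 2 / D₁) : ℝ) : ℂ) *
            ∏ i, ∑' k : ℤ, ((Real.exp (-c * ((k : ℝ) - μ i) ^ 2) : ℝ) : ℂ) := by
          rw [tsum_pi_prodC _ hg_summ]
      _ = ((Real.exp (-‖x‖ ^ 2 / D₁) : ℝ) : ℂ) *
            ∏ i, ((((π / c) ^ ((1:ℝ)/2) : ℝ) : ℂ) * ∑' k : ℤ, Gterm c (μ i) k) := by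
          congr 1
          exact Finset.prod_congr rfl fun i _ => gauss_poisson c (μ i) hc
      _ = ((Real.exp (-‖x‖ ^ 2 / D₁) : ℝ) : ℂ) *
            (((((π / c) ^ ((1:ℝ)/2) : ℝ) : ℂ)) ^ n * ∏ i, ∑' k : ℤ, Gterm c (μ i) k) := by
          rw [Finset.prod_mul_distrib, Finset.prod_const, Finset.card_univ, Fintype.card_fin]
      _ = ((Real.exp (-‖x‖ ^ 2 / D₁) : ℝ) : ℂ) *
            ((((π / c) ^ ((n : ℝ) / 2) : ℝ) : ℂ) *
              ∑' k : Fin n → ℤ, ∏ i, Gterm c (μ i) (k i)) := by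
          rw [tsum_pi_prodC _ (fun i => summable_Gterm c (μ i) hc)]
          congr 2
          rw [← Complex.ofReal_pow]
          congr 1
          rw [← Real.rpow_natCast ((π / c) ^ ((1:ℝ)/2)) n, ← Real.rpow_mul (by positivity)]
          congr 1
          ring
  -- k-side termwise match
  have hF : ∀ k : Fin n → ℤ, (∏ i, Gterm c (μ i) (k i)) =
      Complex.exp (2 * Real.pi * Complex.I * ((A : ℝ) : ℂ) *
          (((∑ i, x i * (k i : ℝ)) : ℝ) : ℂ) / (((h * D₁ : ℝ)) : ℂ)) *
        Complex.exp (-(((Real.pi ^ 2 * D * A * (∑ i, (k i : ℝ) ^ 2) / D₁) : ℝ) : ℂ)) := by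
    intro k
    simp only [Gterm]
    rw [← Complex.exp_sum, ← Complex.exp_add]
    congr 1
    have r1 : ∑ i, (2 * π * (μ i) * ((k i) : ℝ)) =
        2 * π * A * (∑ i, x i * ((k i) : ℝ)) / (h * D₁) := by
      rw [eq_div_iff (by positivity : h * D₁ ≠ 0), Finset.sum_mul, Finset.mul_sum]
      refine Finset.sum_congr rfl fun i _ => ?_
      simp only [hμ_def]
      field_simp
    have r2 : ∑ i, (π ^ 2 * ((k i) : ℝ) ^ 2 / c) =
        π ^ 2 * D * A * (∑ i, ((k i) : ℝ) ^ 2) / D₁ := by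
      rw [Finset.mul_sum, Finset.sum_div]
      refine Finset.sum_congr rfl fun i _ => ?_
      rw [hc_def]
      field_simp
    rw [Finset.sum_sub_distrib, ← Finset.sum_mul, ← Complex.ofReal_sum, ← Complex.ofReal_sum,
      r1, r2]
    push_cast
    ring
  -- summability of full k-sum and splitting off k = 0
  have hsumF : Summable (fun k : Fin n → ℤ => ∏ i, Gterm c (μ i) (k i)) :=
    summable_pi_prodC _ (fun i => summable_Gterm c (μ i) hc)
  have hzero : (∏ i, Gterm c (μ i) ((0 : Fin n → ℤ) i)) = 1 := by
    simp [Gterm]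
  have hsplit : (∑' k : Fin n → ℤ, ∏ i, Gterm c (μ i) (k i))
      = 1 + ∑' k : {k : Fin n → ℤ // k ≠ 0}, ∏ i, Gterm c (μ i) (k.1 i) := by
    rw [← hsumF.tsum_subtype_add_tsum_subtype_compl {0}]
    have h1 : (∑' k : ↑({0} : Set (Fin n → ℤ)), ∏ i, Gterm c (μ i) ((k : Fin n → ℤ) i)) = 1 := by
      rw [tsum_singleton 0 (fun k : Fin n → ℤ => ∏ i, Gterm c (μ i) (k i))]
      exact hzero
    have h2 : (∑' k : ↑({0}ᶜ : Set (Fin n → ℤ)), ∏ i, Gterm c (μ i) ((k : Fin n → ℤ) i))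
        = ∑' k : {k : Fin n → ℤ // k ≠ 0}, ∏ i, Gterm c (μ i) (k.1 i) :=
      ((Equiv.subtypeEquivRight (fun k => by simp)).tsum_eq
        (fun k : ↑({0}ᶜ : Set (Fin n → ℤ)) => ∏ i, Gterm c (μ i) ((k : Fin n → ℤ) i))).symm
    rw [h1, h2]
  -- prefactor arithmetic
  have hPQ : (D₁ / (π * D * A)) ^ ((n:ℝ)/2) * (π / c) ^ ((n:ℝ)/2) = 1 := by
    rw [← Real.mul_rpow (by positivity) (by positivity),
      show D₁ / (π * D * A) * (π / c) = 1 from by rw [hc_def]; field_simp,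
      Real.one_rpow]
  have hPQC : (((D₁ / (π * D * A)) ^ ((n:ℝ)/2) : ℝ) : ℂ) * (((π / c) ^ ((n:ℝ)/2) : ℝ) : ℂ) = 1 := by
    rw [← Complex.ofReal_mul, hPQ, Complex.ofReal_one]
  -- assemble
  rw [hMsum]
  have hS : (∑' k : {k : Fin n → ℤ // k ≠ 0},
        Complex.exp (2 * Real.pi * Complex.I * ((A : ℝ) : ℂ) *
            (((∑ i, x i * (k.1 i : ℝ)) : ℝ) : ℂ) / (((h * D₁ : ℝ)) : ℂ)) *
          Complex.exp (-(((Real.pi ^ 2 * D * A * (∑ i, (k.1 i : ℝ) ^ 2) / D₁) : ℝ) : ℂ)))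
      = ∑' k : {k : Fin n → ℤ // k ≠ 0}, ∏ i, Gterm c (μ i) (k.1 i) :=
    tsum_congr fun k => (hF k.1).symm
  rw [hS, hsplit]
  linear_combination (-(((Real.exp (-‖x‖ ^ 2 / D₁) : ℝ) : ℂ) *
    (1 + ∑' k : {k : Fin n → ℤ // k ≠ 0}, ∏ i, Gterm c (μ i) (k.1 i)))) * hPQC
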